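/- A pathwise embedding f : A → B between synchronization trees of height at most k is a p-morphism if and only if every commutative square P → A, P → Q, Q → B (with P → Q an embedding of paths, and vertical maps into A and B being embeddings making the square commute with f) admits a diagonal filler Q → A in the category of synchronization trees and pathwise embeddings. -/

import Mathlib

/-- A (pointed) Kripke model over a set `V` of propositional variables. -/
structure Kripke (V : Type) where
  World : Type
  R : World → World → Prop
  val : V → World → Prop
  pt : World

/-- A homomorphism of Kripke models. -/
structure KHom {V : Type} (A B : Kripke V) where
  toFun : A.World → B.World
  map_rel : ∀ x y, A.R x y → B.R (toFun x) (toFun y)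
  map_val : ∀ p x, A.val p x → B.val p (toFun x)
  map_pt : toFun A.pt = B.pt

namespace KHom

variable {V : Type} {A B C : Kripke V}

/-- Composition of homomorphisms of Kripke models. -/
def comp (g : KHom B C) (f : KHom A B) : KHom A C where
  toFun := g.toFun ∘ f.toFun
  map_rel := fun x y h => g.map_rel _ _ (f.map_rel _ _ h)
  map_val := fun p x h => g.map_val _ _ (f.map_val _ _ h)
  map_pt := by simp [f.map_pt, g.map_pt]

/-- A pathwise embedding: a homomorphism reflecting the unary predicates. -/
def Pathwise (f : KHom A B) : Prop :=
  ∀ p x, B.val p (f.toFun x) → A.val p x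

/-- An embedding: an injective homomorphism reflecting the unary predicates
and the accessibility relation. -/
def IsEmbedding (f : KHom A B) : Prop :=
  Function.Injective f.toFun ∧ f.Pathwise ∧
    ∀ x y, B.R (f.toFun x) (f.toFun y) → A.R x y

/-- A p-morphism: a pathwise embedding satisfying the back condition. -/
def IsPMorphism (f : KHom A B) : Prop :=
  f.Pathwise ∧ ∀ x y, B.R (f.toFun x) y → ∃ x', A.R x x' ∧ f.toFun x' = y

end KHom

/-- `IsPath A l x` : `l` is a finite R-path from the distinguished element of `A` to `x`. -/
def IsPath {V : Type} (A : Kripke V) (l : List A.World) (x : A.World) : Prop :=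
  l.head? = some A.pt ∧ l.getLast? = some x ∧ l.Chain' A.R

/-- A synchronization tree: every element is reachable from the distinguished
element by a unique finite path along the accessibility relation. -/
def IsSyncTree {V : Type} (A : Kripke V) : Prop :=
  ∀ x, ∃! l, IsPath A l x

/-- Height at most `k`: every path from the root makes at most `k` steps
(i.e. has at most `k+1` elements). -/
def HeightLE {V : Type} (A : Kripke V) (k : ℕ∞) : Prop :=
  ∀ l x, IsPath A l x → (l.length : ℕ∞) ≤ k + 1

/-- A path model: the elements form a finite R-chain starting at the
distinguished element, with no other R-edges. -/
def IsPathModel {V : Type} (A : Kripke V) : Prop :=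
  ∃ l : List A.World, l ≠ [] ∧ l.Nodup ∧ l.head? = some A.pt ∧ (∀ x, x ∈ l) ∧
    ∀ x y, A.R x y ↔ ∃ i, l[i]? = some x ∧ l[i + 1]? = some y

/-- Modal formulas. -/
inductive MF (V : Type) where
  | top | bot
  | var (p : V)
  | neg (φ : MF V)
  | and (φ ψ : MF V)
  | or (φ ψ : MF V)
  | box (φ : MF V)
  | dia (φ : MF V)

/-- Kripke semantics of modal formulas. -/
def Sat {V : Type} (A : Kripke V) (w : A.World) : MF V → Prop
  | .top => True
  | .bot => False
  | .var p => A.val p w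
  | .neg φ => ¬ Sat A w φ
  | .and φ ψ => Sat A w φ ∧ Sat A w ψ
  | .or φ ψ => Sat A w φ ∨ Sat A w ψ
  | .box φ => ∀ x, A.R w x → Sat A x φ
  | .dia φ => ∃ x, A.R w x ∧ Sat A x φ

/-- Modal depth: the maximal nesting of modalities. -/
def MF.depth {V : Type} : MF V → ℕ
  | .top => 0
  | .bot => 0
  | .var _ => 0
  | .neg φ => φ.depth
  | .and φ ψ => max φ.depth ψ.depth
  | .or φ ψ => max φ.depth ψ.depth
  | .box φ => φ.depth + 1
  | .dia φ => φ.depth + 1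

/-- Existential modal formulas: no `□`, negations only on propositional variables. -/
inductive MF.IsExistential {V : Type} : MF V → Prop
  | top : MF.IsExistential .top
  | bot : MF.IsExistential .bot
  | var (p : V) : MF.IsExistential (.var p)
  | negvar (p : V) : MF.IsExistential (.neg (.var p))
  | and {φ ψ} : MF.IsExistential φ → MF.IsExistential ψ → MF.IsExistential (.and φ ψ)
  | or {φ ψ} : MF.IsExistential φ → MF.IsExistential ψ → MF.IsExistential (.or φ ψ)
  | dia {φ} : MF.IsExistential φ → MF.IsExistential (.dia φ)

/-- The tree unravelling of a Kripke model to depth `k`. -/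
def Unravel {V : Type} (A : Kripke V) (k : ℕ∞) : Kripke V where
  World := { l : List A.World // l ≠ [] ∧ l.head? = some A.pt ∧ l.Chain' A.R ∧
    (l.length : ℕ∞) ≤ k + 1 }
  R s t := ∃ x, t.val = s.val ++ [x]
  val p s := ∃ x, s.val.getLast? = some x ∧ A.val p x
  pt := ⟨[A.pt], by simp, by simp, by first | exact List.isChain_singleton _ | exact List.chain'_singleton _ | simp [List.Chain'], by simp⟩

/-- The projection from the unravelling, sending a sequence to its last element. -/
def projFun {V : Type} (A : Kripke V) (k : ℕ∞) : (Unravel A k).World → A.World :=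
  fun s => s.val.getLast s.prop.1


/-!
Forward direction: a homomorphism out of a path model `Q` is the same as a chain from the root of
the right length. The homomorphism `i` maps `P` onto an initial segment of `Q`, so the chain
`α(P)` only has to be continued over the rest of `Q`, and the back condition of `f` lifts the
chain `β(Q)` one step at a time.

Backward direction: for `f x R y`, take the path `l` from the root to `x`; then `f(l) ++ [y]` is
a path in `B`, and since `A` and `B` are trees both paths are embeddings of path models. A filler
of the resulting square sends the last position to a successor `x'` of `x` with `f x' = y`.
-/

open List

section Paths

variable {V : Type} {A B : Kripke V}

theorem KHom.ext {f g : KHom A B} (h : f.toFun = g.toFun) : f = g := by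
  cases f; cases g; cases h; rfl

theorem KHom.Pathwise.of_comp {C : Kripke V} {g : KHom B C} {f : KHom A B}
    (h : (g.comp f).Pathwise) : f.Pathwise :=
  fun p x hx => h p x (g.map_val p _ hx)

variable {l : List A.World} {x y : A.World}

theorem IsPath.ne_nil (h : IsPath A l x) : l ≠ [] := by
  rintro rfl
  simp [IsPath] at h

theorem IsPath.getElem_zero (h : IsPath A l x) (h0 : 0 < l.length) : l[0] = A.pt := by
  simpa [head?_eq_getElem?, getElem?_eq_getElem h0] using h.1

theorem IsPath.getLast_eq (h : IsPath A l x) : l.getLast h.ne_nil = x := by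
  simpa [getLast?_eq_some_getLast h.ne_nil] using h.2.1

theorem IsPath.take (h : IsPath A l x) {i : ℕ} (hi : i < l.length) :
    IsPath A (l.take (i + 1)) l[i] :=
  ⟨by simp [head?_take, h.1], by simp [getLast?_take, hi], h.2.2.prefix (take_prefix _ _)⟩

theorem IsPath.concat (h : IsPath A l x) (hxy : A.R x y) : IsPath A (l ++ [y]) y := by
  refine ⟨by rw [head?_append_of_ne_nil _ h.ne_nil, h.1], getLast?_concat, ?_⟩
  exact IsChain.append h.2.2 (isChain_singleton y) (by simp [h.2.1, hxy])

theorem IsPath.map (f : KHom A B) (h : IsPath A l x) :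
    IsPath B (l.map f.toFun) (f.toFun x) :=
  ⟨by simp [h.1, f.map_pt], by simp [h.2.1], isChain_map_of_isChain _ f.map_rel h.2.2⟩

theorem IsSyncTree.length_eq_of_isPath (hA : IsSyncTree A) {l' : List A.World}
    (h : IsPath A l x) (h' : IsPath A l' x) : l.length = l'.length :=
  congrArg length ((hA x).unique h h')

theorem IsSyncTree.nodup_of_isPath (hA : IsSyncTree A) (h : IsPath A l x) : l.Nodup := by
  rw [nodup_iff_injective_getElem]
  rintro ⟨i, hi⟩ ⟨j, hj⟩ (hij : l[i] = l[j])
  have := hA.length_eq_of_isPath (hij ▸ h.take hi) (h.take hj)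
  simp only [length_take] at this
  ext
  simp only
  omega

theorem IsSyncTree.eq_succ_of_rel (hA : IsSyncTree A) (h : IsPath A l x) {i j : ℕ}
    (hi : i < l.length) (hj : j < l.length) (hR : A.R l[i] l[j]) : j = i + 1 := by
  have := hA.length_eq_of_isPath ((h.take hi).concat hR) (h.take hj)
  simp only [length_append, length_take, length_singleton] at this
  omega

end Paths

section PathModel

variable {V : Type} {A B : Kripke V}

/-- The worlds are the positions in `l`, so this is a path model even if `l` repeats worlds. -/
abbrev pathModel (A : Kripke V) (l : List A.World) (hl : l ≠ []) : Kripke V where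
  World := Fin l.length
  R i j := (j : ℕ) = i + 1
  val p i := A.val p l[i]
  pt := ⟨0, length_pos_iff.mpr hl⟩

theorem List.getElem?_finRange_eq_some_iff {n i : ℕ} {x : Fin n} :
    (finRange n)[i]? = some x ↔ (x : ℕ) = i := by
  rw [getElem?_eq_some_iff]
  constructor
  · rintro ⟨_, rfl⟩
    simp
  · rintro rfl
    simp

variable {l : List A.World} {hl : l ≠ []}

theorem pathModel_isPathModel : IsPathModel (pathModel A l hl) := by
  refine ⟨finRange l.length, by simpa [finRange_eq_nil_iff] using hl, nodup_finRange _, ?_,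
    mem_finRange, fun x y => ?_⟩
  · rw [head?_eq_getElem?, getElem?_finRange_eq_some_iff]
  · simp only [getElem?_finRange_eq_some_iff]
    exact ⟨fun h => ⟨x, rfl, h⟩, by rintro ⟨i, rfl, h⟩; exact h⟩

theorem pathModel_heightLE {k : ℕ∞} (hk : (l.length : ℕ∞) ≤ k + 1) :
    HeightLE (pathModel A l hl) k := by
  rintro c - ⟨-, -, hc⟩
  have hlt : c.Pairwise (fun i j : Fin l.length => i < j) :=
    (IsChain.imp (fun (i j : Fin l.length) (hij : (j : ℕ) = i + 1) => Fin.lt_def.mpr (by omega))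
      (hc : IsChain (pathModel A l hl).R c)).pairwise
  calc (c.length : ℕ∞) ≤ l.length := by
        exact_mod_cast hlt.nodup.length_le_card.trans (Fintype.card_fin _).le
    _ ≤ k + 1 := hk

variable {x : A.World}

def IsPath.pathHom (h : IsPath A l x) : KHom (pathModel A l h.ne_nil) A where
  toFun i := l[i]
  map_rel := by
    rintro i ⟨j, hj⟩ (rfl : j = i + 1)
    exact h.2.2.getElem i hj
  map_val _ _ hx := hx
  map_pt := h.getElem_zero _

theorem IsSyncTree.isEmbedding_pathHom (hA : IsSyncTree A) (h : IsPath A l x) :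
    h.pathHom.IsEmbedding :=
  ⟨fun _ _ hij => Fin.ext ((hA.nodup_of_isPath h).getElem_inj_iff.mp hij), fun _ _ hx => hx,
    fun i j hij => hA.eq_succ_of_rel h i.isLt j.isLt hij⟩

variable {m : List B.World} {hm : m ≠ []}

def pathModelMap (f : KHom A B) (hl : l ≠ []) (hm : m ≠ []) (h : l.map f.toFun <+: m) :
    KHom (pathModel A l hl) (pathModel B m hm) where
  toFun i := ⟨i, i.isLt.trans_le (by simpa using h.length_le)⟩
  map_rel _ _ hij := hij
  map_val p i hx := by simpa [← h.getElem] using f.map_val p _ hx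
  map_pt := rfl

theorem pathModelMap_isEmbedding {f : KHom A B} (hf : f.Pathwise) (h : l.map f.toFun <+: m) :
    (pathModelMap f hl hm h).IsEmbedding := by
  refine ⟨fun _ _ hij => Fin.ext (congrArg Fin.val hij :), fun p i hx => hf p _ ?_,
    fun _ _ hij => hij⟩
  simpa [pathModelMap, pathModel, ← h.getElem] using hx

theorem comp_pathHom_eq_pathHom_comp {f : KHom A B} {y : B.World} (hx : IsPath A l x)
    (hy : IsPath B m y) (h : l.map f.toFun <+: m) :
    f.comp hx.pathHom = hy.pathHom.comp (pathModelMap f hx.ne_nil hy.ne_nil h) :=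
  KHom.ext <| funext fun i => by simp [KHom.comp, IsPath.pathHom, pathModelMap, ← h.getElem]

end PathModel

section PathEnum

variable {V : Type} {Q A B : Kripke V}

structure IsPathEnum (Q : Kripke V) (l : List Q.World) : Prop where
  nodup : l.Nodup
  head?_eq : l.head? = some Q.pt
  mem : ∀ x, x ∈ l
  rel_iff : ∀ x y, Q.R x y ↔ ∃ i, l[i]? = some x ∧ l[i + 1]? = some y

theorem IsPathModel.exists_isPathEnum (h : IsPathModel Q) : ∃ l, IsPathEnum Q l :=
  let ⟨l, _, hnd, hhd, hmem, hR⟩ := h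
  ⟨l, hnd, hhd, hmem, hR⟩

namespace IsPathEnum

variable {l : List Q.World}

theorem ne_nil (hl : IsPathEnum Q l) : l ≠ [] := ne_nil_of_mem (hl.mem Q.pt)

theorem getElem_zero (hl : IsPathEnum Q l) (h0 : 0 < l.length) : l[0] = Q.pt := by
  simpa [head?_eq_getElem?, getElem?_eq_getElem h0] using hl.head?_eq

theorem isChain (hl : IsPathEnum Q l) : IsChain Q.R l :=
  isChain_iff_getElem.mpr fun i hi =>
    (hl.rel_iff _ _).mpr ⟨i, getElem?_eq_getElem _, getElem?_eq_getElem hi⟩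

theorem exists_succ_of_rel (hl : IsPathEnum Q l) {j : ℕ} (hj : j < l.length) {y : Q.World}
    (h : Q.R l[j] y) : ∃ h : j + 1 < l.length, l[j + 1] = y := by
  obtain ⟨i, hi, hi'⟩ := (hl.rel_iff _ _).mp h
  obtain ⟨hi, hij⟩ := List.getElem?_eq_some_iff.mp hi
  obtain rfl : i = j := hl.nodup.getElem_inj_iff.mp hij
  exact List.getElem?_eq_some_iff.mp hi'

theorem prefix_of_isChain (hl : IsPathEnum Q l) {cs : List Q.World} (hc : IsChain Q.R cs)
    (h0 : cs.head? = some Q.pt) : cs <+: l := by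
  have key : ∀ j (hj : j < cs.length), ∃ h : j < l.length, cs[j] = l[j] := by
    intro j hj
    induction j with
    | zero =>
      have hl0 := length_pos_iff.mpr hl.ne_nil
      refine ⟨hl0, ?_⟩
      simpa [hl.getElem_zero hl0, head?_eq_getElem?, getElem?_eq_getElem hj] using h0
    | succ j ih =>
      obtain ⟨hj', hcj⟩ := ih (by omega)
      obtain ⟨h, hlj⟩ := hl.exists_succ_of_rel hj' (hcj ▸ hc.getElem j hj)
      exact ⟨h, hlj.symm⟩
  have hlen : cs.length ≤ l.length := Nat.le_of_not_lt fun h => (key _ h).1.false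
  exact prefix_iff_getElem.mpr ⟨hlen, fun j hj => (key j hj).2⟩

theorem khom_ext (hl : IsPathEnum Q l) {g h : KHom Q A} (H : l.map g.toFun = l.map h.toFun) :
    g = h :=
  KHom.ext <| funext fun x => map_inj_left.mp H x (hl.mem x)

open Classical in
noncomputable def homOfIsChain (hl : IsPathEnum Q l) (ws : List A.World)
    (hlen : ws.length = l.length) (hws : IsChain A.R ws) (h0 : ws.head? = some A.pt)
    (hval : ∀ p j (hj : j < l.length), Q.val p l[j] → A.val p (ws[j]'(hlen ▸ hj))) :
    KHom Q A where
  toFun x := ws[l.idxOf x]'(hlen ▸ idxOf_lt_length_of_mem (hl.mem x))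
  map_rel x y hxy := by
    obtain ⟨i, hx, hy⟩ := (hl.rel_iff x y).mp hxy
    obtain ⟨hi, rfl⟩ := List.getElem?_eq_some_iff.mp hx
    obtain ⟨hi', rfl⟩ := List.getElem?_eq_some_iff.mp hy
    simpa [hl.nodup.idxOf_getElem] using hws.getElem i (by omega)
  map_val p x hx := by
    obtain ⟨j, hj, rfl⟩ := getElem_of_mem (hl.mem x)
    simpa [hl.nodup.idxOf_getElem] using hval p j hj hx
  map_pt := by
    have h0' : 0 < l.length := length_pos_iff.mpr hl.ne_nil
    simpa [← hl.getElem_zero h0', hl.nodup.idxOf_getElem, head?_eq_getElem?,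
      getElem?_eq_getElem (hlen ▸ h0')] using h0

open Classical in
theorem map_homOfIsChain (hl : IsPathEnum Q l) {ws : List A.World} {hlen hws h0 hval} :
    l.map (hl.homOfIsChain ws hlen hws h0 hval).toFun = ws :=
  ext_getElem (by simp [hlen]) fun j _ _ => by
    simp [homOfIsChain, hl.nodup.idxOf_getElem]

end IsPathEnum

theorem KHom.IsPMorphism.exists_isChain_append_map {f : KHom A B} (hf : f.IsPMorphism)
    (bs : List B.World) {as : List A.World} (hne : as ≠ []) (has : IsChain A.R as)
    (hbs : IsChain B.R (as.map f.toFun ++ bs)) :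
    ∃ cs, IsChain A.R (as ++ cs) ∧ cs.map f.toFun = bs := by
  induction bs generalizing as with
  | nil => exact ⟨[], by simpa using has, rfl⟩
  | cons b bs ih =>
    have hb : B.R (f.toFun (as.getLast hne)) b :=
      (isChain_append.mp hbs).2.2 _ (by simp [getLast?_eq_some_getLast hne]) _ rfl
    obtain ⟨a, ha, rfl⟩ := hf.2 _ _ hb
    obtain ⟨cs, hcs, rfl⟩ := ih (as := as ++ [a]) (by simp)
      (has.append (isChain_singleton a) (by simp [getLast?_eq_some_getLast hne, ha]))
      (by simpa using hbs)
    exact ⟨a :: cs, by simpa using hcs, rfl⟩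

theorem IsPathEnum.exists_lift_of_map_eq {l : List Q.World} (hl : IsPathEnum Q l)
    {f : KHom A B} (hf : f.Pathwise) {β : KHom Q B} (hβ : β.Pathwise) {ws : List A.World}
    (hws : IsChain A.R ws) (h0 : ws.head? = some A.pt) (hfw : ws.map f.toFun = l.map β.toFun) :
    ∃ d : KHom Q A, d.Pathwise ∧ l.map d.toFun = ws ∧ f.comp d = β := by
  have hlen : ws.length = l.length := by simpa using congrArg length hfw
  have hfw' : ∀ j (hj : j < l.length), f.toFun ws[j] = β.toFun l[j] := fun j hj => by
    have := getElem_of_eq hfw (i := j) (by simpa [hlen] using hj)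
    rwa [getElem_map, getElem_map] at this
  let d := hl.homOfIsChain ws hlen hws h0
    (fun p j hj hq => hf p _ (by simpa [hfw' j hj] using β.map_val p _ hq))
  have hd : l.map d.toFun = ws := hl.map_homOfIsChain
  have hfd : f.comp d = β := hl.khom_ext <| by
    rw [← hfw, ← hd, map_map]
    rfl
  exact ⟨d, KHom.Pathwise.of_comp (hfd ▸ hβ), hd, hfd⟩

theorem KHom.IsPMorphism.exists_diagonal_filler {P : Kripke V} {f : KHom A B}
    (hf : f.IsPMorphism) (hP : IsPathModel P) (hQ : IsPathModel Q)
    (i : KHom P Q) (α : KHom P A) (β : KHom Q B) (hβ : β.Pathwise)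
    (hsq : f.comp α = β.comp i) :
    ∃ d : KHom Q A, d.Pathwise ∧ d.comp i = α ∧ f.comp d = β := by
  obtain ⟨lP, hlP⟩ := hP.exists_isPathEnum
  obtain ⟨lQ, hlQ⟩ := hQ.exists_isPathEnum
  obtain ⟨rest, hrest⟩ : lP.map i.toFun <+: lQ :=
    hlQ.prefix_of_isChain (isChain_map_of_isChain _ i.map_rel hlP.isChain)
      (by simp [hlP.head?_eq, i.map_pt])
  have hαβ : (lP.map α.toFun).map f.toFun = (lP.map i.toFun).map β.toFun := by
    rw [map_map, map_map]
    exact congrArg (fun g : KHom P B => lP.map g.toFun) hsq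
  have hβQ : IsChain B.R (lQ.map β.toFun) := isChain_map_of_isChain _ β.map_rel hlQ.isChain
  obtain ⟨cs, hc, hcs⟩ := hf.exists_isChain_append_map (rest.map β.toFun)
    (by simpa using hlP.ne_nil) (isChain_map_of_isChain _ α.map_rel hlP.isChain)
    (by rw [hαβ, ← map_append, hrest]; exact hβQ)
  obtain ⟨d, hd, hdQ, hfd⟩ := hlQ.exists_lift_of_map_eq hf.1 hβ hc
    (by simp [hlP.head?_eq, α.map_pt]) (by rw [map_append, hcs, hαβ, ← map_append, hrest])
  refine ⟨d, hd, hlP.khom_ext ?_, hfd⟩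
  have hdP := congrArg (map d.toFun) hrest
  rw [hdQ, map_append] at hdP
  rw [← (append_inj hdP (by simp)).1, map_map]
  rfl

end PathEnum

section Main

variable {V : Type} {A B : Kripke V}

def KHom.HasPathLiftingProperty (k : ℕ∞) (f : KHom A B) : Prop :=
  ∀ (P Q : Kripke V), IsPathModel P → HeightLE P k → IsPathModel Q → HeightLE Q k →
    ∀ (i : KHom P Q) (α : KHom P A) (β : KHom Q B),
      i.IsEmbedding → α.IsEmbedding → β.IsEmbedding →
      f.comp α = β.comp i →
      ∃ d : KHom Q A, d.Pathwise ∧ d.comp i = α ∧ f.comp d = β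

theorem KHom.IsPMorphism.hasPathLiftingProperty {f : KHom A B} (hf : f.IsPMorphism)
    (k : ℕ∞) : f.HasPathLiftingProperty k :=
  fun _ _ hP _ hQ _ i α β _ _ hβ hsq => hf.exists_diagonal_filler hP hQ i α β hβ.2.1 hsq

theorem KHom.HasPathLiftingProperty.isPMorphism {k : ℕ∞} {f : KHom A B}
    (H : f.HasPathLiftingProperty k) (hA : IsSyncTree A) (hAk : HeightLE A k)
    (hB : IsSyncTree B) (hBk : HeightLE B k) (hf : f.Pathwise) : f.IsPMorphism := by
  refine ⟨hf, fun x y hxy => ?_⟩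
  obtain ⟨l, hl, -⟩ := hA x
  have hm := (hl.map f).concat hxy
  have hpre : l.map f.toFun <+: l.map f.toFun ++ [y] := prefix_append _ _
  obtain ⟨d, -, hdi, hdf⟩ := H _ _ pathModel_isPathModel (pathModel_heightLE (hAk l x hl))
    pathModel_isPathModel (pathModel_heightLE (hBk _ _ hm))
    (pathModelMap f hl.ne_nil hm.ne_nil hpre) hl.pathHom hm.pathHom
    (pathModelMap_isEmbedding hf hpre) (hA.isEmbedding_pathHom hl) (hB.isEmbedding_pathHom hm)
    (comp_pathHom_eq_pathHom_comp hl hm hpre)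
  have hn : 0 < l.length := length_pos_iff.mpr hl.ne_nil
  refine ⟨d.toFun ⟨l.length, by simp⟩, ?_, ?_⟩
  · have hx : d.toFun ⟨l.length - 1, by simp⟩ = x := by
      rw [← hl.getLast_eq, getLast_eq_getElem]
      exact congrFun (congrArg KHom.toFun hdi) ⟨l.length - 1, by omega⟩
    exact hx ▸ d.map_rel _ _ (show l.length = l.length - 1 + 1 by omega)
  · have := congrFun (congrArg KHom.toFun hdf) ⟨l.length, by simp⟩
    simpa [KHom.comp, IsPath.pathHom] using this

end Main

/-- A pathwise embedding between synchronization trees of height at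
most `k` is a p-morphism iff every commutative square over an embedding of paths
admits a diagonal filler. -/
theorem stmt15 {V : Type} (k : ℕ∞) (A B : Kripke V)
    (hA : IsSyncTree A) (hAk : HeightLE A k) (hB : IsSyncTree B) (hBk : HeightLE B k)
    (f : KHom A B) (hf : f.Pathwise) :
    f.IsPMorphism ↔
      ∀ (P Q : Kripke V), IsPathModel P → HeightLE P k → IsPathModel Q → HeightLE Q k →
        ∀ (i : KHom P Q) (α : KHom P A) (β : KHom Q B),
          i.IsEmbedding → α.IsEmbedding → β.IsEmbedding →
          f.comp α = β.comp i →
          ∃ d : KHom Q A, d.Pathwise ∧ d.comp i = α ∧ f.comp d = β :=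
  ⟨fun hpm => hpm.hasPathLiftingProperty k,
    fun H => KHom.HasPathLiftingProperty.isPMorphism H hA hAk hB hBk hf⟩
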